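/- A copy of |H⟩ consumed by a controlled-Y gate and a Y-basis measurement implements the non-Clifford gate Y(π/4): for every ψ ∈ ℂ², (⟨y₊| ⊗ 1)(CY(|H⟩ ⊗ ψ)) = (1/√2)·Y(π/4)ψ and (⟨y₋| ⊗ 1)(CY(|H⟩ ⊗ ψ)) = (1/√2)·Y(−π/4)ψ; moreover Y(π/2)·Y(−π/4) = Y(π/4), so after the conditional correction Y(π/2) on the minus outcome both branches yield Y(π/4)ψ (each with probability 1/2). -/
import Mathlib


open Matrix Kronecker

def Ymat : Matrix (Fin 2) (Fin 2) ℂ := !![0, -Complex.I; Complex.I, 0]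

/-- The rotation `Y(θ) = cos(θ/2)·1 − i·sin(θ/2)·Y`. -/
noncomputable def Yrot (θ : ℝ) : Matrix (Fin 2) (Fin 2) ℂ :=
  (Real.cos (θ / 2) : ℂ) • (1 : Matrix (Fin 2) (Fin 2) ℂ)
    - (Complex.I * (Real.sin (θ / 2) : ℂ)) • Ymat

/-- `|H⟩ = cos(π/8)|0⟩ + sin(π/8)|1⟩`. -/
noncomputable def ketH : Fin 2 → ℂ :=
  ![(Real.cos (Real.pi / 8) : ℂ), (Real.sin (Real.pi / 8) : ℂ)]

/-- `|y₊⟩ = (|0⟩ + i|1⟩)/√2`. -/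
noncomputable def ketYplus : Fin 2 → ℂ := ((Real.sqrt 2 : ℂ))⁻¹ • ![1, Complex.I]

/-- `|y₋⟩ = (|0⟩ − i|1⟩)/√2`. -/
noncomputable def ketYminus : Fin 2 → ℂ := ((Real.sqrt 2 : ℂ))⁻¹ • ![1, -Complex.I]

/-- The controlled-`Y` gate `|0⟩⟨0| ⊗ 1 + |1⟩⟨1| ⊗ Y` (first factor is the control). -/
def CY : Matrix (Fin 2 × Fin 2) (Fin 2 × Fin 2) ℂ :=
  (!![1, 0; 0, 0] : Matrix (Fin 2) (Fin 2) ℂ) ⊗ₖ (1 : Matrix (Fin 2) (Fin 2) ℂ)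
    + (!![0, 0; 0, 1] : Matrix (Fin 2) (Fin 2) ℂ) ⊗ₖ Ymat

/-- Tensor product of two vectors in `ℂ²`. -/
def tens (v w : Fin 2 → ℂ) : Fin 2 × Fin 2 → ℂ := fun p => v p.1 * w p.2

/-- Contraction of the first tensor factor of a two-qubit vector with `⟨b|`,
i.e. the action of the 2×4 matrix `⟨b| ⊗ 1`. -/
noncomputable def contrFst (b : Fin 2 → ℂ) (x : Fin 2 × Fin 2 → ℂ) : Fin 2 → ℂ :=
  fun k => ∑ j : Fin 2, star (b j) * x (j, k)

lemma Yrot_mul (a b : ℝ) : Yrot a * Yrot b = Yrot (a+b) := by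
  ext i j
  fin_cases i <;> fin_cases j <;>
    simp [Yrot, Ymat, Matrix.mul_apply, Fin.sum_univ_succ, Matrix.one_apply, add_div,
      Real.cos_add, Real.sin_add, Complex.ext_iff] <;> constructor <;> ring

theorem gate_teleportation_Y_quarter :
    (∀ ψ : Fin 2 → ℂ,
      contrFst ketYplus (CY.mulVec (tens ketH ψ))
        = ((Real.sqrt 2 : ℂ))⁻¹ • (Yrot (Real.pi / 4)).mulVec ψ) ∧
    (∀ ψ : Fin 2 → ℂ,
      contrFst ketYminus (CY.mulVec (tens ketH ψ))
        = ((Real.sqrt 2 : ℂ))⁻¹ • (Yrot (-(Real.pi / 4))).mulVec ψ) ∧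
    Yrot (Real.pi / 2) * Yrot (-(Real.pi / 4)) = Yrot (Real.pi / 4) := by
  refine ⟨?_, ?_, ?_⟩
  · intro ψ
    funext k
    have h8 : Real.pi / 4 / 2 = Real.pi / 8 := by ring
    fin_cases k <;>
      simp [contrFst, ketYplus, ketH, CY, Ymat, Yrot, tens, Matrix.mulVec, dotProduct,
        Fintype.sum_prod_type, Fin.sum_univ_succ, Matrix.one_apply, h8] <;> ring
  · intro ψ
    funext k
    have h8 : -(Real.pi / 4) / 2 = -(Real.pi / 8) := by ring
    fin_cases k <;>
      simp [contrFst, ketYminus, ketH, CY, Ymat, Yrot, tens, Matrix.mulVec, dotProduct,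
        Fintype.sum_prod_type, Fin.sum_univ_succ, Matrix.one_apply, h8, Real.cos_neg, Real.sin_neg] <;> ring
  · rw [Yrot_mul, show Real.pi / 2 + -(Real.pi / 4) = Real.pi / 4 from by ring]
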